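/- If a, b ∈ ℂ satisfy max{|a|, |b|} ≤ 2/π, then there exists a harmonic mapping u : 𝔻 → 𝔻 with u(0) = 0, ∂u(0) = a, and ∂̄u(0) = b. -/

import Mathlib

/-!
The pairs `(∂u(0), ∂̄u(0))` realised by harmonic self-maps `u` of the disc fixing `0` form a
convex set, since convex combinations of such maps are again such maps. This set contains every
pair `(P, Q)` with `|P| = |Q| = 2/π`: writing `iP = c l` and `-iQ = c l̄` with `|l| = 1`, the map
`z ↦ c · Im log ((1 + l z) / (1 - l z))` works, because `Im log ((1 + w) / (1 - w))` takes values
in `(-π/2, π/2)` on the disc. The closed bidisc of radius `2/π` is the convex hull of these pairs.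
-/

open Metric Set

/-- `u` is harmonic on the unit disc: it is `C²` there and its Laplacian vanishes at
every point of the disc. -/
def HarmonicOnDisc {E : Type*} [NormedAddCommGroup E] [NormedSpace ℝ E] (u : ℂ → E) : Prop :=
  ContDiffOn ℝ 2 u (ball 0 1) ∧
  ∀ z ∈ ball (0 : ℂ) 1,
    fderiv ℝ (fun w => fderiv ℝ u w 1) z 1
      + fderiv ℝ (fun w => fderiv ℝ u w Complex.I) z Complex.I = 0

open Complex InnerProductSpace ComplexConjugate

theorem harmonicOnDisc_of_harmonicOnNhd {E : Type*} [NormedAddCommGroup E] [NormedSpace ℝ E]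
    {u : ℂ → E} (hu : HarmonicOnNhd u (ball 0 1)) : HarmonicOnDisc u := by
  refine ⟨hu.contDiffOn, fun z hz => ?_⟩
  have hdiff : DifferentiableAt ℝ (fderiv ℝ u) z :=
    ((hu z hz).1.fderiv_right (m := 1) le_rfl).differentiableAt one_ne_zero
  have hΔ := congrFun (laplacian_eq_iteratedFDeriv_complexPlane u) z
  simp only [(hu z hz).2.eq_of_nhds, Pi.zero_apply, iteratedFDeriv_two_apply] at hΔ
  simpa [fderiv_clm_apply hdiff (differentiableAt_const _)] using hΔ.symm

noncomputable def wirtingerPair (L : ℂ →L[ℝ] ℂ) : ℂ × ℂ :=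
  ((1 / 2) * (L 1 - I * L I), (1 / 2) * (L 1 + I * L I))

theorem wirtingerPair_add (L M : ℂ →L[ℝ] ℂ) :
    wirtingerPair (L + M) = wirtingerPair L + wirtingerPair M := by
  simp only [wirtingerPair, add_apply, Prod.mk_add_mk]
  congr 1 <;> ring

theorem wirtingerPair_smul (t : ℝ) (L : ℂ →L[ℝ] ℂ) :
    wirtingerPair (t • L) = t • wirtingerPair L := by
  simp only [wirtingerPair, smul_apply, Prod.smul_mk, Complex.real_smul]
  congr 1 <;> ring

def harmonicSelfMapWirtingerSet : Set (ℂ × ℂ) :=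
  {p | ∃ u : ℂ → ℂ, HarmonicOnNhd u (ball 0 1) ∧ MapsTo u (ball 0 1) (ball 0 1) ∧ u 0 = 0 ∧
    wirtingerPair (fderiv ℝ u 0) = p}

theorem convex_harmonicSelfMapWirtingerSet : Convex ℝ harmonicSelfMapWirtingerSet := by
  rintro _ ⟨u, hu, hmaps, hu0, rfl⟩ _ ⟨v, hv, vmaps, hv0, rfl⟩ s t hs ht hst
  have hdu : DifferentiableAt ℝ u 0 := (hu 0 (mem_ball_self one_pos)).1.differentiableAt two_ne_zero
  have hdv : DifferentiableAt ℝ v 0 := (hv 0 (mem_ball_self one_pos)).1.differentiableAt two_ne_zero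
  refine ⟨s • u + t • v, (hu.const_smul).add hv.const_smul,
    fun z hz => convex_ball 0 1 (hmaps hz) (vmaps hz) hs ht hst, by simp [hu0, hv0], ?_⟩
  rw [fderiv_add (hdu.const_smul s) (hdv.const_smul t), fderiv_const_smul hdu,
    fderiv_const_smul hdv, wirtingerPair_add, wirtingerPair_smul, wirtingerPair_smul]

theorem exists_mul_eq_and_mul_conj_eq {P Q : ℂ} (h : ‖P‖ = ‖Q‖) :
    ∃ c l : ℂ, ‖c‖ = ‖P‖ ∧ ‖l‖ = 1 ∧ c * l = P ∧ c * conj l = Q := by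
  refine ⟨‖P‖ * exp (↑((arg P + arg Q) / 2) * I), exp (↑((arg P - arg Q) / 2) * I),
    by rw [norm_mul, norm_exp_ofReal_mul_I, norm_real, norm_norm, mul_one],
    norm_exp_ofReal_mul_I _, ?_, ?_⟩
  · rw [mul_assoc, ← Complex.exp_add, ← add_mul, ← ofReal_add]
    convert norm_mul_exp_arg_mul_I P using 5
    ring
  · rw [← Complex.exp_conj, map_mul, conj_ofReal, conj_I, mul_assoc, ← Complex.exp_add, h]
    convert norm_mul_exp_arg_mul_I Q using 3
    push_cast
    ring

noncomputable def diskToStrip (z : ℂ) : ℂ := log ((1 + z) / (1 - z))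

theorem one_sub_ne_zero_of_norm_lt_one {z : ℂ} (hz : ‖z‖ < 1) : 1 - z ≠ 0 :=
  sub_ne_zero.mpr fun h => by simp [← h] at hz

theorem re_one_add_div_one_sub_pos {z : ℂ} (hz : ‖z‖ < 1) : 0 < ((1 + z) / (1 - z)).re := by
  have hnum : ((1 + z) * conj (1 - z)).re = 1 - ‖z‖ ^ 2 := by
    rw [Complex.sq_norm, normSq_apply]
    simp only [map_sub, map_one, mul_re, add_re, one_re, sub_re, conj_re, add_im, one_im,
      zero_add, sub_im, conj_im]
    ring
  have hz2 : ‖z‖ ^ 2 < 1 := by nlinarith [norm_nonneg z]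
  rw [div_eq_mul_inv, inv_def, ← mul_assoc, re_mul_ofReal, hnum]
  exact mul_pos (by linarith) (inv_pos.mpr (normSq_pos.mpr (one_sub_ne_zero_of_norm_lt_one hz)))

theorem differentiableAt_one_add_div_one_sub {z : ℂ} (hz : ‖z‖ < 1) :
    DifferentiableAt ℂ (fun w : ℂ => (1 + w) / (1 - w)) z :=
  (differentiableAt_id.const_add 1).div (differentiableAt_id.const_sub 1)
    (one_sub_ne_zero_of_norm_lt_one hz)

theorem differentiableOn_diskToStrip : DifferentiableOn ℂ diskToStrip (ball 0 1) := fun _ hz =>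
  ((differentiableAt_one_add_div_one_sub (mem_ball_zero_iff.mp hz)).clog
    (Or.inl (re_one_add_div_one_sub_pos (mem_ball_zero_iff.mp hz)))).differentiableWithinAt

theorem abs_im_diskToStrip_lt {z : ℂ} (hz : ‖z‖ < 1) : |(diskToStrip z).im| < Real.pi / 2 := by
  rw [diskToStrip, log_im]
  exact abs_arg_lt_pi_div_two_iff.mpr (Or.inl (re_one_add_div_one_sub_pos hz))

theorem hasDerivAt_diskToStrip_zero : HasDerivAt diskToStrip 2 0 := by
  have hquot : HasDerivAt (fun z : ℂ => (1 + z) / (1 - z))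
      ((1 * (1 - 0) - (1 + 0) * -1) / (1 - 0) ^ 2) 0 :=
    ((hasDerivAt_id' 0).const_add 1).fun_div ((hasDerivAt_id' 0).const_sub 1) (by norm_num)
  have hlog := hquot.clog (by simp)
  norm_num at hlog
  exact hlog

theorem wirtingerPair_fderiv_mul_ofReal_im (c : ℂ) {f : ℂ → ℂ} {d w : ℂ}
    (hf : HasDerivAt f d w) :
    wirtingerPair (fderiv ℝ (fun z => c * ((f z).im : ℂ)) w) =
      (-I * c * d / 2, I * c * conj d / 2) := by
  have h := (((c • ofRealCLM : ℝ →L[ℝ] ℂ).comp imCLM).hasFDerivAt (x := f w)).comp w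
    (hf.hasFDerivAt.restrictScalars ℝ)
  rw [show (fun z => c * ((f z).im : ℂ)) = ((c • ofRealCLM : ℝ →L[ℝ] ℂ).comp imCLM) ∘ f by
    ext z; simp, h.fderiv]
  conv_rhs => rw [← re_add_im d]
  simp only [wirtingerPair, ContinuousLinearMap.comp_apply,
    ContinuousLinearMap.coe_restrictScalars', ContinuousLinearMap.toSpanSingleton_apply,
    smul_apply, smul_eq_mul, one_mul, imCLM_apply, ofRealCLM_apply, mul_im, I_re, I_im, zero_mul,
    zero_add, map_add, map_mul, conj_ofReal, conj_I, Prod.mk.injEq]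
  constructor <;> linear_combination (c * d.im / 2) * I_sq

theorem sphere_prod_sphere_subset_harmonicSelfMapWirtingerSet :
    sphere (0 : ℂ) (2 / Real.pi) ×ˢ sphere (0 : ℂ) (2 / Real.pi) ⊆
      harmonicSelfMapWirtingerSet := by
  rintro ⟨P, Q⟩ ⟨hP, hQ⟩
  rw [mem_sphere_zero_iff_norm] at hP hQ
  obtain ⟨c, l, hc, hl, hcl, hclbar⟩ :=
    exists_mul_eq_and_mul_conj_eq (P := I * P) (Q := -I * Q) (by simp [hP, hQ])
  have hlz : ∀ z ∈ ball (0 : ℂ) 1, l * z ∈ ball (0 : ℂ) 1 := fun z hz => by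
    simpa [hl] using hz
  refine ⟨fun z => c * ((diskToStrip (l * z)).im : ℂ), fun z hz => ?_, fun z hz => ?_,
    by simp [diskToStrip], ?_⟩
  · have hf : AnalyticAt ℂ (fun w => diskToStrip (l * w)) z :=
      (differentiableOn_diskToStrip.analyticOnNhd isOpen_ball _ (hlz z hz)).comp
        (analyticAt_const.mul analyticAt_id)
    exact hf.harmonicAt_im.comp_CLM (c • ofRealCLM)
  · have him := abs_im_diskToStrip_lt (mem_ball_zero_iff.mp (hlz z hz))
    rw [mem_ball_zero_iff, norm_mul, norm_real, Real.norm_eq_abs, hc, mul_comm I, norm_mul,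
      norm_I, mul_one]
    calc ‖P‖ * |(diskToStrip (l * z)).im| < (2 / Real.pi) * (Real.pi / 2) := by
          rw [hP]; exact mul_lt_mul_of_pos_left him (by positivity)
      _ = 1 := by field_simp
  · have hderiv : HasDerivAt (fun z => diskToStrip (l * z)) (2 * l) 0 := by
      have h := hasDerivAt_diskToStrip_zero.comp_of_eq 0
        ((hasDerivAt_id' 0).const_mul l) (mul_zero l).symm
      rw [mul_one] at h
      exact h
    rw [wirtingerPair_fderiv_mul_ofReal_im c hderiv, map_mul, map_ofNat]
    ext
    · linear_combination -I * hcl - P * I_sq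
    · linear_combination I * hclbar - Q * I_sq

/-- If `a, b ∈ ℂ` satisfy `max{|a|,|b|} ≤ 2/π`, then there exists a
harmonic mapping `u : 𝔻 → 𝔻` with `u(0) = 0`, `∂u(0) = a`, and `∂̄u(0) = b`, where
`∂u = (1/2)(uₓ − i·u_y)` and `∂̄u = (1/2)(uₓ + i·u_y)`. -/
theorem stmt18 (a b : ℂ) (hab : max ‖a‖ ‖b‖ ≤ 2 / Real.pi) :
    ∃ u : ℂ → ℂ, HarmonicOnDisc u ∧ MapsTo u (ball 0 1) (ball 0 1) ∧ u 0 = 0 ∧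
      (1 / 2) * (fderiv ℝ u 0 1 - Complex.I * fderiv ℝ u 0 Complex.I) = a ∧
      (1 / 2) * (fderiv ℝ u 0 1 + Complex.I * fderiv ℝ u 0 Complex.I) = b := by
  have hr : 0 ≤ 2 / Real.pi := by positivity
  have hab' : (a, b) ∈ convexHull ℝ (sphere (0 : ℂ) (2 / Real.pi) ×ˢ sphere 0 (2 / Real.pi)) := by
    rw [convexHull_prod, convexHull_sphere_eq_closedBall 0 hr]
    exact ⟨mem_closedBall_zero_iff.mpr (le_of_max_le_left hab),
      mem_closedBall_zero_iff.mpr (le_of_max_le_right hab)⟩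
  obtain ⟨u, hu, hmaps, hu0, hwirt⟩ := convexHull_min
    sphere_prod_sphere_subset_harmonicSelfMapWirtingerSet convex_harmonicSelfMapWirtingerSet hab'
  exact ⟨u, harmonicOnDisc_of_harmonicOnNhd hu, hmaps, hu0, congrArg Prod.fst hwirt,
    congrArg Prod.snd hwirt⟩
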